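/- In the MMF object-generation and reference-generation phases, each rule application strictly decreases the measure μ(C) = (length of the identifier pool, sum of widths of pending reference tasks) in lexicographic order: Obj-Gen and Obj-Skip decrease the first component; Ref-Skip fixes the first component and decreases the total width by 1; Ref-Choose fixes the first component and decreases the total width by the width of the removed task, which is at least 1. -/
import Mathlib


/-- Abstract MMF construction steps on configurations `(L, T)` where `L` is the
identifier pool and `T` the multiset of pending reference-task widths. -/
inductive MMFStep (Id : Type) : List Id × Multiset ℕ → List Id × Multiset ℕ → Prop
  | objGenOrSkip (x : Id) (L : List Id) (T T' : Multiset ℕ) :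
      MMFStep Id (x :: L, T) (L, T')
  | refSkip (L : List Id) (w : ℕ) (T : Multiset ℕ) (hw : 2 ≤ w) :
      MMFStep Id (L, w ::ₘ T) (L, (w - 1) ::ₘ T)
  | refChoose (L : List Id) (w : ℕ) (T : Multiset ℕ) (hw : 1 ≤ w) :
      MMFStep Id (L, w ::ₘ T) (L, T)

/-- The lexicographic measure: pool length, then total task width. -/
def mmfMeasure {Id : Type} (s : List Id × Multiset ℕ) : ℕ × ℕ :=
  (s.1.length, s.2.sum)

theorem stmt3 {Id : Type} (s s' : List Id × Multiset ℕ) (h : MMFStep Id s s') :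
    Prod.Lex (· < ·) (· < ·) (mmfMeasure s') (mmfMeasure s) := by
  cases h with
  | objGenOrSkip x L T T' =>
      exact Prod.Lex.left _ _ (by simp [mmfMeasure])
  | refSkip L w T hw =>
      refine Prod.Lex.right _ ?_
      simp only [mmfMeasure, Multiset.sum_cons]
      omega
  | refChoose L w T hw =>
      refine Prod.Lex.right _ ?_
      simp only [mmfMeasure, Multiset.sum_cons]
      omega
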